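/- Let Q : ℍ → ℍ be a bounded linear operator satisfying Q ∘ S = S ∘ Q. Then for every f ∈ H²(𝔻) and every k ∈ {1,…,d}, Q(f·e_k) = f·Q(e_k), where the product on the right is pointwise multiplication of the function f with each component of Q(e_k). -/

import Mathlib

/-!
Common framework: the Hardy space `H²(𝔻)` is modeled as the Hilbert space of
square-summable Taylor-coefficient sequences (`lp (fun _ : ℕ => ℂ) 2`), with
`H2.toFun` the associated holomorphic function on the unit disc 𝔻 = ball 0 1,
and `ℍ` is the ℓ²-direct sum of `d` copies of `H²(𝔻)`.
-/

open Complex Metric Set Filter MeasureTheory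

noncomputable section

/-- The Hardy space `H²(𝔻)`, via square-summable Taylor coefficients. -/
abbrev H2 : Type := lp (fun _ : ℕ => ℂ) 2

open scoped Classical in
/-- The element of `H²` with coefficient sequence `c` (junk value `0` if `c ∉ ℓ²`). -/
def H2.ofCoeffs (c : ℕ → ℂ) : H2 := if h : Memℓp c 2 then ⟨c, h⟩ else 0

/-- The holomorphic function on the unit disc represented by `f ∈ H²`. -/
def H2.toFun (f : H2) (z : ℂ) : ℂ := ∑' n : ℕ, f n * z ^ n

/-- The `n`-th Taylor coefficient of `g` at `0`. -/
def taylorCoeff (g : ℂ → ℂ) (n : ℕ) : ℂ := iteratedDeriv n g 0 / n.factorial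

/-- The element of `H²` whose Taylor coefficients are those of the function `g`. -/
def H2.ofFun (g : ℂ → ℂ) : H2 := H2.ofCoeffs (taylorCoeff g)

/-- The shift `S₁` on `H²(𝔻)`, i.e. multiplication by `z`. -/
def H2.shift (f : H2) : H2 := H2.ofCoeffs (fun n => if n = 0 then 0 else f (n - 1))

/-- `g ∈ H^∞(𝔻)`: bounded and holomorphic on the unit disc. -/
def MemHinf (g : ℂ → ℂ) : Prop :=
  DifferentiableOn ℂ g (ball (0:ℂ) 1) ∧ ∃ C : ℝ, ∀ z ∈ ball (0:ℂ) 1, ‖g z‖ ≤ C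

/-- Multiplication of a (bounded holomorphic) function `g` with `f ∈ H²`. -/
def H2.hmul (g : ℂ → ℂ) (f : H2) : H2 := H2.ofFun (fun z => g z * f.toFun z)

/-- The set `φ·H²(𝔻) ⊆ H²(𝔻)`. -/
def H2.mulSet (φ : ℂ → ℂ) : Set H2 := Set.range (H2.hmul φ)

/-- `φ` is an inner function: holomorphic `𝔻 → 𝔻`, with radial boundary values of
modulus `1` almost everywhere. -/
def IsInner (φ : ℂ → ℂ) : Prop :=
  DifferentiableOn ℂ φ (ball (0:ℂ) 1) ∧ (∀ z ∈ ball (0:ℂ) 1, ‖φ z‖ ≤ 1) ∧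
    ∀ᵐ θ : ℝ ∂volume, Tendsto (fun r : ℝ => ‖φ ((r : ℂ) * Complex.exp (θ * Complex.I))‖)
      (nhdsWithin 1 (Iio 1)) (nhds 1)

/-- The inner function `φ` divides the inner function `ψ`, i.e. `ψ/φ` is inner. -/
def InnerDvd (φ ψ : ℂ → ℂ) : Prop :=
  ∃ η, IsInner η ∧ ∀ z ∈ ball (0:ℂ) 1, ψ z = φ z * η z

/-- The inner function `χ` divides the inner part of `f`, i.e. `f/χ` is still
holomorphic on the disc. -/
def InnerDvdFun (χ f : ℂ → ℂ) : Prop :=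
  ∃ g, DifferentiableOn ℂ g (ball (0:ℂ) 1) ∧ ∀ z ∈ ball (0:ℂ) 1, f z = χ z * g z

/-- `O` is outer: the polynomial multiples of `O`, i.e. the span of `S₁ⁿ O`, are
dense in `H²(𝔻)` (`O` is a cyclic vector for the shift). -/
def IsOuterFun (O : ℂ → ℂ) : Prop :=
  Dense (↑(Submodule.span ℂ (Set.range fun n : ℕ => H2.shift^[n] (H2.ofFun O))) : Set H2)

/-- `φ` is the inner part of the inner-outer factorization `f = φ·O`. -/
def IsInnerPart (f φ : ℂ → ℂ) : Prop :=
  IsInner φ ∧ ∃ O : ℂ → ℂ, IsOuterFun O ∧ ∀ z ∈ ball (0:ℂ) 1, f z = φ z * O z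

/-- `ℍ`: the Hilbert direct sum of `d` copies of `H²(𝔻)`. -/
abbrev HilbH (d : ℕ) : Type := PiLp 2 (fun _ : Fin d => H2)

/-- The shift `S` on `ℍ`. -/
def shiftH (d : ℕ) (F : HilbH d) : HilbH d := WithLp.toLp 2 (fun i => H2.shift (F i))

/-- Componentwise multiplication of `F ∈ ℍ` by a function `g`. -/
def hmulH (d : ℕ) (g : ℂ → ℂ) (F : HilbH d) : HilbH d := WithLp.toLp 2 (fun i => H2.hmul g (F i))

/-- The `(j,J)`-determinantal operator associated to the `m×m` matrix `B` of
functions: replace the `j`-th row of `B` by `(f_{J 0}, …, f_{J (m-1)})` and take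
the determinant. -/
def detOp {d m : ℕ} (B : Fin m → Fin m → (ℂ → ℂ)) (j : Fin m) (J : Fin m → Fin d)
    (F : HilbH d) : H2 :=
  H2.ofFun (fun z => Matrix.det (Matrix.of fun a b =>
    if a = j then (F (J b)).toFun z else B a b z))

/-- Data defining a determinantal operator: an `m×m` matrix with entries in
`H^∞(𝔻)`, a row index `j` and an increasing multi-index `J`. -/
structure DetData (d : ℕ) where
  m : ℕ
  B : Fin m → Fin m → (ℂ → ℂ)
  hB : ∀ a b, MemHinf (B a b)
  j : Fin m
  J : Fin m → Fin d
  hJ : StrictMono J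

/-- The determinantal operator of a `DetData`. -/
def DetData.op {d : ℕ} (D : DetData d) : HilbH d → H2 := detOp D.B D.j D.J

/-- A determinantal brick based on the inner function `φ`: `L⁻¹(φ H²)`. -/
def IsDetBrickInner (d : ℕ) (φ : ℂ → ℂ) (Q : Set (HilbH d)) : Prop :=
  ∃ D : DetData d, Q = {F | D.op F ∈ H2.mulSet φ}

/-- A determinantal brick based on `0`: `L⁻¹({0})`. -/
def IsDetBrickZero (d : ℕ) (Q : Set (HilbH d)) : Prop :=
  ∃ D : DetData d, Q = {F | D.op F = 0}

/-- A determinantal space based on `φ`: finite intersection of bricks based on `φ`. -/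
def IsDetSpaceInner (d : ℕ) (φ : ℂ → ℂ) (Q : Set (HilbH d)) : Prop :=
  ∃ (n : ℕ) (Qs : Fin n → Set (HilbH d)), 0 < n ∧ (∀ i, IsDetBrickInner d φ (Qs i)) ∧
    Q = ⋂ i, Qs i

/-- A determinantal space based on `0`: finite intersection of bricks based on `0`. -/
def IsDetSpaceZero (d : ℕ) (Q : Set (HilbH d)) : Prop :=
  ∃ (n : ℕ) (Qs : Fin n → Set (HilbH d)), 0 < n ∧ (∀ i, IsDetBrickZero d (Qs i)) ∧
    Q = ⋂ i, Qs i

/-- The determinant of a matrix of functions, evaluated at `z`. -/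
def detFn {p : ℕ} (B : Fin p → Fin p → (ℂ → ℂ)) (z : ℂ) : ℂ :=
  Matrix.det (Matrix.of fun a b => B a b z)

/-- `det B ≢ 0` on the disc. -/
def NonzeroDet {p : ℕ} (B : Fin p → Fin p → (ℂ → ℂ)) : Prop :=
  ¬ ∀ z ∈ ball (0:ℂ) 1, detFn B z = 0

/-- `f ≡ 0` on the disc. -/
def ZeroOnBall (f : ℂ → ℂ) : Prop := ∀ z ∈ ball (0:ℂ) 1, f z = 0

/-- Pointwise rank of a matrix of functions. -/
def rankAt {p q : ℕ} (B : Fin p → Fin q → (ℂ → ℂ)) (z : ℂ) : ℕ :=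
  (Matrix.of fun a b => B a b z).rank

/-- A matrix of functions on 𝔻 has rank `k`: pointwise rank `≤ k` everywhere on the
disc and `= k` somewhere. -/
def FMatRank {p q : ℕ} (B : Fin p → Fin q → (ℂ → ℂ)) (k : ℕ) : Prop :=
  (∀ z ∈ ball (0:ℂ) 1, rankAt B z ≤ k) ∧ ∃ z₀ ∈ ball (0:ℂ) 1, rankAt B z₀ = k

/-- `φ` is the inner greatest common divisor `φ_A` of the matrix `A`: an inner
function dividing the inner part of every nonzero entry, and divisible by every
inner function with that property. -/
def IsPhiA {d : ℕ} (A : Fin d → Fin d → (ℂ → ℂ)) (φ : ℂ → ℂ) : Prop :=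
  IsInner φ ∧ (∀ j l, ¬ ZeroOnBall (A j l) → InnerDvdFun φ (A j l)) ∧
    ∀ χ, IsInner χ → (∀ j l, ¬ ZeroOnBall (A j l) → InnerDvdFun χ (A j l)) → InnerDvd χ φ

/-- `Ahat` is the reduced matrix `Â` of `A ∈ M∞(d×d)`, with inner g.c.d. `φA`:
all entries are in `H^∞` and `A = φ_A·Â` on the disc. -/
def IsReducedPair {d : ℕ} (A Ahat : Fin d → Fin d → (ℂ → ℂ)) (φA : ℂ → ℂ) : Prop :=
  (∀ j l, MemHinf (A j l)) ∧ (∀ j l, MemHinf (Ahat j l)) ∧ IsPhiA A φA ∧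
    ∀ j l, ∀ z ∈ ball (0:ℂ) 1, A j l z = φA z * Ahat j l z

/-- `ℛ(A)`: the set of `F ∈ ℍ` such that the `(d+1)×d` matrix obtained by adjoining
the row `(f₁,…,f_d)` to `Â` still has rank `k`. -/
def RSet (d k : ℕ) (Ahat : Fin d → Fin d → (ℂ → ℂ)) : Set (HilbH d) :=
  {F | FMatRank (fun a : Fin (d+1) =>
    Fin.cases (motive := fun _ => Fin d → ℂ → ℂ)
      (fun b => (F b).toFun) (fun i b => Ahat i b) a) k}

/-- The space `𝒩_A = φ_A·(⋂_j L_{Â,j}⁻¹(I(det Â)·H²))` (case `det A ≢ 0`), where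
`φdet = I(det Â)`. -/
def NASet (d : ℕ) (Ahat : Fin d → Fin d → (ℂ → ℂ)) (φA φdet : ℂ → ℂ) : Set (HilbH d) :=
  hmulH d φA '' (⋂ j : Fin d, {F | detOp Ahat j id F ∈ H2.mulSet φdet})

/-- The minor of `Ahat` with rows `Srow` and columns `J`. -/
def minorM {d k : ℕ} (Ahat : Fin d → Fin d → (ℂ → ℂ)) (Srow : Fin k → Fin d)
    (J : Fin k → Fin d) : Fin k → Fin k → (ℂ → ℂ) := fun a b => Ahat (Srow a) (J b)

/-- `𝒥_J(Â)`: the increasing row multi-indices `S` such that `det Â^{S,J} ≢ 0`. -/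
def goodSetJ {d k : ℕ} (Ahat : Fin d → Fin d → (ℂ → ℂ)) (J : Fin k → Fin d) :
    Set (Fin k → Fin d) := {Srow | StrictMono Srow ∧ NonzeroDet (minorM Ahat Srow J)}

/-- `J` is a good multi-index of `Â`. -/
def IsGoodIndex {d k : ℕ} (Ahat : Fin d → Fin d → (ℂ → ℂ)) (J : Fin k → Fin d) : Prop :=
  StrictMono J ∧ (goodSetJ Ahat J).Nonempty

/-- `φJ = φ_{J,A}`: the g.c.d. of the inner parts of `det Â^{S,J}`, `S ∈ 𝒥_J(Â)`. -/
def IsPhiJA {d k : ℕ} (Ahat : Fin d → Fin d → (ℂ → ℂ)) (J : Fin k → Fin d)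
    (φJ : ℂ → ℂ) : Prop :=
  IsInner φJ ∧ (∀ Srow ∈ goodSetJ Ahat J, InnerDvdFun φJ (detFn (minorM Ahat Srow J))) ∧
    ∀ χ, IsInner χ → (∀ Srow ∈ goodSetJ Ahat J, InnerDvdFun χ (detFn (minorM Ahat Srow J))) →
      InnerDvd χ φJ

/-- The space `𝒩_{A,J}` (case `det A ≡ 0`, rank `k`). -/
def NAJSet (d k : ℕ) (Ahat : Fin d → Fin d → (ℂ → ℂ)) (φA : ℂ → ℂ)
    (J : Fin k → Fin d) (φJ : ℂ → ℂ) : Set (HilbH d) :=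
  hmulH d φA ''
    ((⋂ Srow ∈ goodSetJ Ahat J, ⋂ j : Fin k,
        {F | detOp (minorM Ahat Srow J) j J F ∈ H2.mulSet φJ}) ∩ RSet d k Ahat)

/-- `A` is a Beurling–Lax matrix of `N`. -/
def IsBLMatrix (d : ℕ) (N : Set (HilbH d)) (A : Fin d → Fin d → (ℂ → ℂ)) : Prop :=
  (∀ j l, MemHinf (A j l) ∧ ∀ z ∈ ball (0:ℂ) 1, ‖A j l z‖ ≤ 1) ∧
  N = {F : HilbH d | ∃ h : Fin d → H2, ∀ i, F i = ∑ j : Fin d, H2.hmul (A j i) (h j)}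

/-- The element `a_{j1}e₁ + … + a_{jd}e_d` of `ℍ` built from the `j`-th row of `A`. -/
def rowVec (d : ℕ) (A : Fin d → Fin d → (ℂ → ℂ)) (j : Fin d) : HilbH d :=
  WithLp.toLp 2 (fun i => H2.ofFun (A j i))

/-- The closure of the span of `{Sⁿ(a_{j1}e₁+…+a_{jd}e_d) : n ∈ ℕ, j = 1,…,d}`. -/
def cyclicSpan (d : ℕ) (A : Fin d → Fin d → (ℂ → ℂ)) : Set (HilbH d) :=
  closure (↑(Submodule.span ℂ
    (Set.range fun p : ℕ × Fin d => (shiftH d)^[p.1] (rowVec d A p.2))) : Set (HilbH d))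

/-- `ℍ_∞`: the elements of `ℍ` all of whose components are bounded. -/
def HinfSubset (d : ℕ) : Set (HilbH d) := {F | ∀ i, MemHinf ((F i).toFun)}

/-- The constant function `1` as an element of `H²`. -/
def H2.one : H2 := H2.ofCoeffs (fun n => if n = 0 then 1 else 0)

/-- The element `f·e_k` of `ℍ`. -/
def singleVec (d : ℕ) (k : Fin d) (f : H2) : HilbH d := WithLp.toLp 2 (fun i => if i = k then f else 0)

/-!
Since `Q` commutes with `S`, it sends `zⁿ·e_k = Sⁿ e_k` to `Sⁿ Q(e_k) = zⁿ·Q(e_k)`.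
Expanding `f = ∑ fₙ zⁿ` in `H²`, continuity of `Q` gives `Q(f·e_k) = ∑ fₙ zⁿ·Q(e_k)`, and
since point evaluation at `z ∈ 𝔻` is continuous on `H²` (it is the inner product with the
reproducing kernel `(z̄ⁿ)ₙ`), this sum evaluates at `z` to `f(z)·Q(e_k)(z)`.
-/

open scoped ComplexConjugate

namespace H2

lemma memℓp_two_iff {c : ℕ → ℂ} : Memℓp c 2 ↔ Summable fun n => ‖c n‖ ^ (2 : ℝ) := by
  simpa using memℓp_gen_iff (p := 2) (E := fun _ : ℕ => ℂ) (f := c) (by norm_num)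

lemma ofCoeffs_coe (f : H2) : H2.ofCoeffs f = f := by
  rw [H2.ofCoeffs, dif_pos (lp.memℓp f)]

lemma ofCoeffs_apply {c : ℕ → ℂ} (hc : Memℓp c 2) (n : ℕ) : H2.ofCoeffs c n = c n := by
  rw [H2.ofCoeffs, dif_pos hc]

lemma shift_apply (f : H2) (n : ℕ) : H2.shift f n = if n = 0 then 0 else f (n - 1) := by
  refine ofCoeffs_apply ?_ n
  rw [memℓp_two_iff, ← summable_nat_add_iff 1]
  simpa using memℓp_two_iff.mp (lp.memℓp f)

@[simp]
lemma shift_zero : H2.shift 0 = 0 := lp.ext <| funext fun n => by simp [shift_apply]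

lemma shift_single (n : ℕ) (a : ℂ) :
    H2.shift (lp.single 2 n a) = lp.single 2 (n + 1) a := lp.ext <| funext fun m => by
  rcases m with _ | m <;> simp [shift_apply, Pi.single_apply]

lemma one_eq_single : H2.one = lp.single 2 0 1 := by
  have h : (fun n : ℕ => if n = 0 then (1 : ℂ) else 0) = ⇑(lp.single 2 0 (1 : ℂ) : H2) :=
    funext fun n => by simp [Pi.single_apply]
  rw [H2.one, h, ofCoeffs_coe]

lemma shift_iterate_one (n : ℕ) : H2.shift^[n] H2.one = lp.single 2 n 1 := by
  induction n with
  | zero => exact one_eq_single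
  | succ n ih => rw [Function.iterate_succ_apply', ih, shift_single]

def reproducingKernel {z : ℂ} (hz : ‖z‖ < 1) : H2 :=
  ⟨fun n => conj z ^ n, memℓp_two_iff.mpr <| by
    have hz2 : ‖z‖ ^ 2 < 1 := pow_lt_one₀ (norm_nonneg z) hz two_ne_zero
    refine (summable_geometric_of_lt_one (by positivity) hz2).congr fun n => ?_
    rw [norm_pow, RCLike.norm_conj, Real.rpow_two, ← pow_mul, ← pow_mul, mul_comm]⟩

def evalCLM {z : ℂ} (hz : ‖z‖ < 1) : H2 →L[ℂ] ℂ := innerSL ℂ (reproducingKernel hz)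

lemma evalCLM_single {z : ℂ} (hz : ‖z‖ < 1) (n : ℕ) (a : ℂ) :
    evalCLM hz (lp.single 2 n a) = a * z ^ n := by
  rw [evalCLM, innerSL_apply_apply, lp.inner_eq_tsum, tsum_eq_single n]
  · simp [reproducingKernel]
  · intro m hm
    simp [hm]

lemma hasSum_evalCLM {z : ℂ} (hz : ‖z‖ < 1) (f : H2) :
    HasSum (fun n => f n * z ^ n) (evalCLM hz f) := by
  simpa only [evalCLM_single] using (lp.hasSum_single (by norm_num) f).mapL (evalCLM hz)

lemma toFun_eq_evalCLM {z : ℂ} (hz : ‖z‖ < 1) (f : H2) : f.toFun z = evalCLM hz f :=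
  (hasSum_evalCLM hz f).tsum_eq

lemma hasSum_toFun {z : ℂ} (hz : ‖z‖ < 1) (f : H2) :
    HasSum (fun n => f n * z ^ n) (f.toFun z) :=
  toFun_eq_evalCLM hz f ▸ hasSum_evalCLM hz f

lemma toFun_shift {z : ℂ} (hz : ‖z‖ < 1) (f : H2) :
    (H2.shift f).toFun z = z * f.toFun z := by
  refine (hasSum_toFun hz _).unique ((hasSum_nat_add_iff' 1).mp ?_)
  simp only [Finset.sum_range_one, shift_apply, if_pos, pow_zero, zero_mul, sub_zero]
  refine ((hasSum_toFun hz f).mul_left z).congr_fun fun n => ?_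
  simp only [Nat.add_one_ne_zero, if_false, Nat.add_sub_cancel, pow_succ]
  ring

lemma toFun_shift_iterate {z : ℂ} (hz : ‖z‖ < 1) (n : ℕ) (f : H2) :
    (H2.shift^[n] f).toFun z = z ^ n * f.toFun z := by
  induction n with
  | zero => simp
  | succ n ih =>
    rw [Function.iterate_succ_apply', toFun_shift hz, ih]
    ring

lemma hasFPowerSeriesOnBall_toFun (f : H2) :
    HasFPowerSeriesOnBall f.toFun (FormalMultilinearSeries.ofScalars ℂ fun n => f n) 0 1 where
  r_le := by
    refine ENNReal.le_of_forall_nnreal_lt fun r hr => ?_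
    refine FormalMultilinearSeries.le_radius_of_bound _ ‖f‖ fun n => ?_
    have hr1 : (r : ℝ) ≤ 1 := by exact_mod_cast hr.le
    rw [FormalMultilinearSeries.ofScalars_norm]
    calc ‖f n‖ * (r : ℝ) ^ n ≤ ‖f‖ * 1 :=
          mul_le_mul (lp.norm_apply_le_norm two_ne_zero f n) (pow_le_one₀ r.2 hr1)
            (pow_nonneg r.2 n) (norm_nonneg _)
      _ = ‖f‖ := mul_one _
  r_pos := one_pos
  hasSum {y} hy := by
    have hy' : ‖y‖ < 1 := by
      rw [Metric.mem_eball, edist_zero_right, enorm_eq_nnnorm, ENNReal.coe_lt_one_iff] at hy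
      exact_mod_cast hy
    simpa [FormalMultilinearSeries.ofScalars_apply_eq, mul_comm] using hasSum_toFun hy' f

lemma taylorCoeff_toFun (f : H2) (n : ℕ) : taylorCoeff f.toFun n = f n := by
  have hfac := (hasFPowerSeriesOnBall_toFun f).factorial_smul 1 n
  rw [FormalMultilinearSeries.ofScalars_apply_eq, one_pow, smul_eq_mul, mul_one,
    nsmul_eq_mul] at hfac
  rw [taylorCoeff, iteratedDeriv_eq_iteratedFDeriv, ← hfac]
  exact mul_div_cancel_left₀ _ (Nat.cast_ne_zero.mpr n.factorial_ne_zero)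

lemma ofFun_toFun (f : H2) : H2.ofFun f.toFun = f := by
  rw [H2.ofFun, funext (taylorCoeff_toFun f), ofCoeffs_coe]

lemma ofFun_congr {g₁ g₂ : ℂ → ℂ} (h : Set.EqOn g₁ g₂ (Metric.ball 0 1)) :
    H2.ofFun g₁ = H2.ofFun g₂ := by
  have hg : g₁ =ᶠ[nhds 0] g₂ := Filter.eventuallyEq_of_mem (Metric.ball_mem_nhds _ one_pos) h
  rw [H2.ofFun, H2.ofFun]
  congr 1
  funext n
  rw [taylorCoeff, taylorCoeff, hg.iteratedDeriv_eq n]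

theorem apply_eq_ofFun_mul_of_commute_shift (T : H2 →L[ℂ] H2)
    (hT : Function.Commute T H2.shift) (f : H2) :
    T f = H2.ofFun fun z => f.toFun z * (T H2.one).toFun z := by
  have hmonomial (n : ℕ) (a : ℂ) : T (lp.single 2 n a) = a • H2.shift^[n] (T H2.one) := by
    rw [← hT.iterate_right n, shift_iterate_one, ← map_smul, ← lp.single_smul, smul_eq_mul,
      mul_one]
  have hexpand : HasSum (fun n => f n • H2.shift^[n] (T H2.one)) (T f) := by
    simpa only [hmonomial] using (lp.hasSum_single (by norm_num) f).mapL T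
  have hpointwise : Set.EqOn (T f).toFun (fun z => f.toFun z * (T H2.one).toFun z)
      (Metric.ball 0 1) := by
    intro z hz
    have hz' : ‖z‖ < 1 := by simpa using hz
    have hsum := hexpand.mapL (evalCLM hz')
    simp only [map_smul, smul_eq_mul] at hsum
    simp only [← toFun_eq_evalCLM hz', toFun_shift_iterate hz'] at hsum
    exact hsum.unique (by simpa only [mul_assoc] using (hasSum_toFun hz' f).mul_right _)
  rw [← ofFun_congr hpointwise, ofFun_toFun]

end H2

lemma singleVec_shift (d : ℕ) (k : Fin d) (f : H2) :
    singleVec d k (H2.shift f) = shiftH d (singleVec d k f) := by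
  ext i
  by_cases hi : i = k <;> simp [singleVec, shiftH, hi]

def compSingleVec {d : ℕ} (Q : HilbH d →L[ℂ] HilbH d) (k i : Fin d) : H2 →L[ℂ] H2 :=
  PiLp.proj 2 (fun _ : Fin d => H2) i ∘L Q ∘L
    ((PiLp.continuousLinearEquiv 2 ℂ fun _ : Fin d => H2).symm.toContinuousLinearMap ∘L
      ContinuousLinearMap.single ℂ (fun _ : Fin d => H2) k)

lemma compSingleVec_apply {d : ℕ} (Q : HilbH d →L[ℂ] HilbH d) (k i : Fin d) (f : H2) :
    compSingleVec Q k i f = Q (singleVec d k f) i := by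
  have h : (PiLp.continuousLinearEquiv 2 ℂ fun _ : Fin d => H2).symm (Pi.single k f) =
      singleVec d k f :=
    PiLp.ext fun j => by by_cases hj : j = k <;> simp [singleVec, hj]
  simp [compSingleVec, h]

theorem commuting_operator_is_multiplication_general (d : ℕ)
    (Q : HilbH d →L[ℂ] HilbH d) (hQ : ∀ F, Q (shiftH d F) = shiftH d (Q F))
    (f : H2) (k : Fin d) :
    ∀ i, (Q (singleVec d k f)) i =
      H2.ofFun (fun z => f.toFun z * ((Q (singleVec d k H2.one)) i).toFun z) := by
  intro i
  have hcomm : Function.Commute (compSingleVec Q k i) H2.shift := fun g => by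
    simp only [compSingleVec_apply, singleVec_shift, hQ]
    rfl
  simpa only [compSingleVec_apply] using
    H2.apply_eq_ofFun_mul_of_commute_shift (compSingleVec Q k i) hcomm f

/-- **Lemma.** If `Q : ℍ → ℍ` is bounded linear and commutes with the shift `S`,
then `Q(f·e_k) = f·Q(e_k)` for every `f ∈ H²` and `k`. -/
theorem commuting_operator_is_multiplication (d : ℕ) (hd : 0 < d)
    (Q : HilbH d →L[ℂ] HilbH d) (hQ : ∀ F, Q (shiftH d F) = shiftH d (Q F))
    (f : H2) (k : Fin d) :
    ∀ i, (Q (singleVec d k f)) i =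
      H2.ofFun (fun z => f.toFun z * ((Q (singleVec d k H2.one)) i).toFun z) :=
  commuting_operator_is_multiplication_general d Q hQ f k
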